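/- Let g : [0,∞)×ℝ^d → ℝ^d be continuously differentiable and let θ : [0,t_e) → ℝ^d satisfy θ(0) = θ_s and (d/dt)θ(t) = g(t, θ(t)) for all t. Let η > 0 and let θ̄ : [0,∞) → ℝ^d be the continuous polygonal curve produced by Euler's method: θ̄(0) = θ_0 and (d/dt)θ̄(t) = g(t_k, θ_k) for t ∈ (t_k, t_{k+1}), where t_k := kη and θ_{k+1} = θ_k + η·g(t_k, θ_k). For t ∈ [0,t_e), q ∈ ℝ^d, let J(t,q) ∈ ℝ^{d×d} be the Jacobian of g with respect to its second argument and λ_max(t,q) the maximal eigenvalue of ½(J(t,q) + J(t,q)ᵀ). Suppose m : [0,t_e) → ℝ is integrable and satisfies λ_max(t,q) ≤ m(t) for all t ∈ [0,t_e) and all q on the line segment in ℝ^d between θ(t) and θ̄(t), and δ : [0,t_e) → ℝ_{≥0} is integrable and satisfies ‖(d/dt)θ̄(t⁺) − g(t, θ̄(t))‖₂ ≤ δ(t) for all t ∈ [0,t_e), where (d/dt)θ̄(t⁺) denotes the right derivative of θ̄ at t. Then for every t ∈ [0,t_e): ‖θ(t) − θ̄(t)‖₂ ≤ e^{μ(t)}·(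 ‖θ(0) − θ̄(0)‖₂ + ∫₀ᵗ e^{−μ(t′)} δ(t′) dt′ ), where μ(t) := ∫₀ᵗ m(t′) dt′. -/

import Mathlib

open scoped RealInnerProductSpace
open MeasureTheory Set Filter Topology

noncomputable section

/-- The Euler-method iterates for the initial value problem `θ' = g(t, θ)` with step
size `η`: `θ_{k+1} = θ_k + η • g(kη, θ_k)`. -/
def eulerIter {d : ℕ} (g : ℝ → EuclideanSpace ℝ (Fin d) → EuclideanSpace ℝ (Fin d))
    (η : ℝ) (θ0 : EuclideanSpace ℝ (Fin d)) : ℕ → EuclideanSpace ℝ (Fin d)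
  | 0 => θ0
  | k + 1 => eulerIter g η θ0 k + η • g (k * η) (eulerIter g η θ0 k)

/-- The continuous polygonal curve interpolating the Euler iterates: for
`t ∈ [kη, (k+1)η]`, `θ̄(t) = θ_k + (t - kη) • g(kη, θ_k)`; in particular its right
derivative at `t ≥ 0` is `g(t_k, θ_k)` with `k = ⌊t/η⌋`. -/
def eulerCurve {d : ℕ} (g : ℝ → EuclideanSpace ℝ (Fin d) → EuclideanSpace ℝ (Fin d))
    (η : ℝ) (θ0 : EuclideanSpace ℝ (Fin d)) (t : ℝ) : EuclideanSpace ℝ (Fin d) :=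
  eulerIter g η θ0 ⌊t / η⌋₊ +
    (t - ⌊t / η⌋₊ * η) • g (⌊t / η⌋₊ * η) (eulerIter g η θ0 ⌊t / η⌋₊)

section EulerLemmas

variable {d : ℕ} (g : ℝ → EuclideanSpace ℝ (Fin d) → EuclideanSpace ℝ (Fin d))
  (η : ℝ) (θ0 : EuclideanSpace ℝ (Fin d))

/-- affine piece of the Euler polygon -/
def eulerAff (k : ℕ) (s : ℝ) : EuclideanSpace ℝ (Fin d) :=
  eulerIter g η θ0 k + (s - k * η) • g (k * η) (eulerIter g η θ0 k)

lemma euler_floor_const (hη : 0 < η) {x s : ℝ} (hx : 0 ≤ x) (h1 : x ≤ s)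
    (h2 : s < (⌊x / η⌋₊ + 1) * η) : ⌊s / η⌋₊ = ⌊x / η⌋₊ := by
  have hs : 0 ≤ s / η := div_nonneg (hx.trans h1) hη.le
  rw [Nat.floor_eq_iff hs]
  constructor
  · exact le_trans (Nat.floor_le (div_nonneg hx hη.le)) (by gcongr)
  · rw [div_lt_iff₀ hη] at *
    exact lt_of_lt_of_le h2 (by push_cast; ring_nf; exact le_rfl)

lemma eulerCurve_eq_aff {s : ℝ} {k : ℕ} (h : ⌊s / η⌋₊ = k) :
    eulerCurve g η θ0 s = eulerAff g η θ0 k s := by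
  rw [eulerCurve, h]; rfl

lemma eulerAff_end (k : ℕ) :
    eulerAff g η θ0 k ((k + 1) * η) = eulerIter g η θ0 (k + 1) := by
  show _ = eulerIter g η θ0 k + η • g (k * η) (eulerIter g η θ0 k)
  rw [eulerAff]
  congr 1
  congr 1
  push_cast
  ring

lemma eulerAff_hasDerivAt (k : ℕ) (s : ℝ) :
    HasDerivAt (eulerAff g η θ0 k) (g (k * η) (eulerIter g η θ0 k)) s := by
  have h := (((hasDerivAt_id s).sub_const ((k : ℝ) * η)).smul_const
      (g (k * η) (eulerIter g η θ0 k))).const_add (eulerIter g η θ0 k)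
  rw [show eulerAff g η θ0 k = fun x => eulerIter g η θ0 k + (id x - k * η) • g (k * η) (eulerIter g η θ0 k) from rfl]
  simpa only [one_smul] using h

lemma eulerCurve_lt_next (hη : 0 < η) (x : ℝ) : x < (⌊x / η⌋₊ + 1) * η := by
  rw [← div_lt_iff₀ hη]
  exact_mod_cast Nat.lt_floor_add_one (x / η)

lemma eulerCurve_hasDerivWithinAt (hη : 0 < η) {x : ℝ} (hx : 0 ≤ x) :
    HasDerivWithinAt (eulerCurve g η θ0)
      (g (⌊x / η⌋₊ * η) (eulerIter g η θ0 ⌊x / η⌋₊)) (Ici x) x := by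
  set k := ⌊x / η⌋₊ with hk
  have hmem : Ico x ((k + 1) * η) ∈ 𝓝[≥] x :=
    Ico_mem_nhdsGE (eulerCurve_lt_next η hη x)
  have haff : HasDerivWithinAt (eulerAff g η θ0 k)
      (g (k * η) (eulerIter g η θ0 k)) (Ici x) x :=
    (eulerAff_hasDerivAt g η θ0 k x).hasDerivWithinAt
  refine haff.congr_of_eventuallyEq ?_ ?_
  · filter_upwards [hmem] with s hs
    exact eulerCurve_eq_aff g η θ0 (euler_floor_const η hη hx hs.1 hs.2)
  · exact eulerCurve_eq_aff g η θ0 rfl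

lemma eulerCurve_continuous (hη : 0 < η) : Continuous (eulerCurve g η θ0) := by
  rw [continuous_iff_continuousAt]
  intro x
  rcases lt_or_ge x η with hxη | hxη
  · -- on `Iio η` the curve agrees with the affine piece for `k = 0`
    have h0 : ∀ s ∈ Iio η, eulerCurve g η θ0 s = eulerAff g η θ0 0 s := by
      intro s hs
      refine eulerCurve_eq_aff g η θ0 ?_
      rw [Nat.floor_eq_zero]
      exact (div_lt_one hη).mpr hs
    refine ContinuousAt.congr (eulerAff_hasDerivAt g η θ0 0 x).continuousAt ?_
    filter_upwards [Iio_mem_nhds hxη] with s hs using (h0 s hs).symm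
  · -- x ≥ η > 0
    have hx0 : 0 < x := lt_of_lt_of_le hη hxη
    obtain ⟨k, hk⟩ : ∃ k, ⌊x / η⌋₊ = k := ⟨_, rfl⟩
    have hk1 : 1 ≤ k := hk ▸ Nat.le_floor (by rw [le_div_iff₀ hη]; simpa using hxη)
    have hklo : (k : ℝ) * η ≤ x := by
      rw [← le_div_iff₀ hη, ← hk]
      exact Nat.floor_le (div_nonneg hx0.le hη.le)
    rcases eq_or_lt_of_le hklo with heq | hlt
    · -- x = k η, k ≥ 1 : glue left and right pieces
      rw [continuousAt_iff_continuous_left_right]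
      refine ⟨?_, ?_⟩
      · -- left continuity, via the (k-1) affine piece on `Ioc ((k-1)η, x]`
        obtain ⟨j, rfl⟩ : ∃ j, k = j + 1 := ⟨k - 1, (Nat.succ_pred_eq_of_pos hk1).symm⟩
        have hjlt : (j : ℝ) * η < x := by
          rw [← heq]; push_cast; nlinarith
        have hIoc : Ioc ((j : ℝ) * η) x ∈ 𝓝[≤] x := Ioc_mem_nhdsLE hjlt
        have hcast : ((j + 1 : ℕ) : ℝ) * η = ((j:ℝ) + 1) * η := by push_cast; ring
        have heqIoc : ∀ s ∈ Ioc ((j : ℝ) * η) x, eulerCurve g η θ0 s = eulerAff g η θ0 j s := by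
          intro s hs
          rcases eq_or_lt_of_le hs.2 with hsx | hsx
          · subst hsx
            rw [eulerCurve_eq_aff g η θ0 hk]
            have h1 : eulerAff g η θ0 (j + 1) s = eulerIter g η θ0 (j + 1) := by
              rw [eulerAff, ← heq]; simp
            have h2 : eulerAff g η θ0 j s = eulerIter g η θ0 (j + 1) := by
              rw [← heq, hcast]; exact eulerAff_end g η θ0 j
            rw [h1, h2]
          · refine eulerCurve_eq_aff g η θ0 ?_
            have hs0 : 0 ≤ s / η := div_nonneg (le_trans (by positivity) hs.1.le) hη.le
            rw [Nat.floor_eq_iff hs0]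
            refine ⟨by rw [le_div_iff₀ hη]; exact hs.1.le, ?_⟩
            rw [div_lt_iff₀ hη]
            calc s < x := hsx
              _ = ((j : ℝ) + 1) * η := by rw [← heq]; push_cast; ring
        refine ContinuousWithinAt.mono_of_mem_nhdsWithin ?_ hIoc
        refine ContinuousWithinAt.congr
          ((eulerAff_hasDerivAt g η θ0 j x).continuousAt.continuousWithinAt)
          heqIoc (heqIoc x ⟨hjlt, le_refl x⟩)
      · have h := (eulerCurve_hasDerivWithinAt g η θ0 hη hx0.le).continuousWithinAt
        exact h
    · -- kη < x < (k+1)η : locally the affine piece k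
      have hup : x < ((k : ℝ) + 1) * η := by
        have := eulerCurve_lt_next η hη x
        rw [hk] at this
        exact_mod_cast this
      have hIoo : Ioo ((k : ℝ) * η) (((k : ℝ) + 1) * η) ∈ 𝓝 x := Ioo_mem_nhds hlt hup
      refine ContinuousAt.congr (eulerAff_hasDerivAt g η θ0 k x).continuousAt ?_
      filter_upwards [hIoo] with s hs
      refine (eulerCurve_eq_aff g η θ0 ?_).symm
      have hs0 : 0 ≤ s / η := div_nonneg (le_trans (by positivity) hs.1.le) hη.le
      rw [Nat.floor_eq_iff hs0]
      exact ⟨by rw [le_div_iff₀ hη]; exact hs.1.le, by rw [div_lt_iff₀ hη]; exact_mod_cast hs.2⟩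

end EulerLemmas


lemma continuousOn_sSup_param {α β : Type*} [PseudoMetricSpace α] [PseudoMetricSpace β]
    {s : Set α} {K : Set β} (hs : IsCompact s) (hK : IsCompact K) (hKne : K.Nonempty)
    {F : α × β → ℝ} (hF : ContinuousOn F (s ×ˢ K)) :
    ContinuousOn (fun x => sSup ((fun y => F (x, y)) '' K)) s := by
  have hslice : ∀ a ∈ s, ContinuousOn (fun y => F (a, y)) K := fun a ha =>
    hF.comp (Continuous.prodMk_right a).continuousOn fun y hy => ⟨ha, hy⟩
  have hbdd : ∀ a ∈ s, BddAbove ((fun y => F (a, y)) '' K) := fun a ha =>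
    (hK.image_of_continuousOn (hslice a ha)).bddAbove
  have hUC := (hs.prod hK).uniformContinuousOn_of_continuous hF
  rw [Metric.uniformContinuousOn_iff] at hUC
  rw [Metric.continuousOn_iff]
  intro x hx ε hε
  obtain ⟨δ, hδ, H⟩ := hUC (ε / 2) (by positivity)
  refine ⟨δ, hδ, fun y hy hdist => ?_⟩
  have key : ∀ a ∈ s, ∀ b ∈ s, dist a b < δ →
      sSup ((fun z => F (a, z)) '' K) ≤ sSup ((fun z => F (b, z)) '' K) + ε / 2 := by
    intro a ha b hb hab
    refine csSup_le (hKne.image _) ?_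
    rintro r ⟨z, hz, rfl⟩
    have hd : dist ((a, z) : α × β) (b, z) < δ := by
      rw [Prod.dist_eq]
      simp only [dist_self]
      exact max_lt hab hδ
    have h := H (a, z) ⟨ha, hz⟩ (b, z) ⟨hb, hz⟩ hd
    rw [Real.dist_eq] at h
    have h1 : F (a, z) ≤ F (b, z) + ε / 2 := by
      have := abs_lt.1 h; linarith [this.1, this.2]
    exact h1.trans (add_le_add_left (le_csSup (hbdd b hb) ⟨z, hz, rfl⟩) _)
  rw [Real.dist_eq, abs_sub_lt_iff]
  have h1 := key y hy x hx hdist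
  have h2 := key x hx y hy (by rwa [dist_comm] at hdist)
  constructor <;> linarith

section Core

variable {E : Type*} [NormedAddCommGroup E] [InnerProductSpace ℝ E]

lemma gronwall_core (T : ℝ) (hT : 0 ≤ T)
    (u : ℝ → E) (hu_cont : ContinuousOn u (Icc 0 T))
    (u' : ℝ → E) (hu' : ∀ x ∈ Ico 0 T, HasDerivWithinAt u (u' x) (Ici x) x)
    (p : ℝ → ℝ) (hp_cont : ContinuousOn p (Icc 0 T))
    (q : ℝ → ℝ) (hq0 : ∀ x ∈ Icc 0 T, 0 ≤ q x)
    (hq_int : IntegrableOn q (Icc 0 T))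
    (hq_rc : ∀ x ∈ Ico 0 T, ContinuousWithinAt q (Ici x) x)
    (hbound : ∀ x ∈ Ico 0 T, ⟪u x, u' x⟫ ≤ p x * ‖u x‖ ^ 2 + q x * ‖u x‖) :
    ‖u T‖ ≤ Real.exp (∫ s in (0:ℝ)..T, p s) *
      (‖u 0‖ + ∫ s in (0:ℝ)..T, Real.exp (-∫ r in (0:ℝ)..s, p r) * q s) := by
  set P : ℝ → ℝ := fun x => ∫ s in (0:ℝ)..x, p s with hP
  have hpii : IntervalIntegrable p volume 0 T :=
    (by rwa [uIcc_of_le hT] : ContinuousOn p (uIcc 0 T)).intervalIntegrable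
  have hPcont : ContinuousOn P (Icc 0 T) := by
    have := intervalIntegral.continuousOn_primitive_interval' hpii left_mem_uIcc
    rwa [uIcc_of_le hT] at this
  have hmem : ∀ x ∈ Ico (0:ℝ) T, Icc (0:ℝ) T ∈ 𝓝[Ici x] x := by
    intro x hx
    have h1 : Ici x ∩ Iio T ∈ 𝓝[Ici x] x :=
      inter_mem self_mem_nhdsWithin (mem_nhdsWithin_of_mem_nhds (Iio_mem_nhds hx.2))
    exact mem_of_superset h1 fun z hz => ⟨le_trans hx.1 hz.1, hz.2.le⟩
  have hmem' : ∀ x ∈ Ico (0:ℝ) T, Icc (0:ℝ) T ∈ 𝓝[Ioi x] x := fun x hx =>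
    nhdsWithin_mono x Ioi_subset_Ici_self (hmem x hx)
  have hP' : ∀ x ∈ Ico (0:ℝ) T, HasDerivWithinAt P (p x) (Ici x) x := by
    intro x hx
    refine intervalIntegral.integral_hasDerivWithinAt_right
      (hpii.mono_set ?_) ⟨Icc 0 T, hmem' x hx, hp_cont.aestronglyMeasurable measurableSet_Icc⟩
      (((hp_cont x ⟨hx.1, hx.2.le⟩).mono_of_mem_nhdsWithin (hmem x hx)).mono Ioi_subset_Ici_self)
    rw [uIcc_of_le hx.1, uIcc_of_le hT]
    exact Icc_subset_Icc le_rfl hx.2.le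
  -- the `ε`-perturbed comparison
  have hmain : ∀ ε > (0:ℝ), ‖u T‖ ≤
      (Real.exp (P T) * (‖u 0‖ + ∫ s in (0:ℝ)..T, Real.exp (-P s) * q s)) +
        ε * (Real.exp (P T) * (1 + ∫ s in (0:ℝ)..T, Real.exp (-P s))) := by
    intro ε hε
    set ρ : ℝ → ℝ := fun s => Real.exp (-P s) * (q s + ε) with hρdef
    have hexpc : ContinuousOn (fun s => Real.exp (-P s)) (Icc 0 T) :=
      Real.continuous_exp.comp_continuousOn hPcont.neg
    obtain ⟨C, hC⟩ := isCompact_Icc.exists_bound_of_continuousOn hexpc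
    have hqε_int : IntegrableOn (fun s => q s + ε) (Icc 0 T) :=
      hq_int.add (integrableOn_const measure_Icc_lt_top.ne)
    have hρ_int : IntegrableOn ρ (Icc 0 T) :=
      Integrable.bdd_mul hqε_int (hexpc.aestronglyMeasurable measurableSet_Icc)
        ((ae_restrict_iff' measurableSet_Icc).2 (ae_of_all _ fun s hs => hC s hs))
    have hρii : IntervalIntegrable ρ volume 0 T :=
      (intervalIntegrable_iff_integrableOn_Icc_of_le hT).2 hρ_int
    set R : ℝ → ℝ := fun x => ∫ s in (0:ℝ)..x, ρ s with hRdef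
    have hRcont : ContinuousOn R (Icc 0 T) := by
      have := intervalIntegral.continuousOn_primitive_interval' hρii left_mem_uIcc
      rwa [uIcc_of_le hT] at this
    have hR' : ∀ x ∈ Ico (0:ℝ) T, HasDerivWithinAt R (ρ x) (Ici x) x := by
      intro x hx
      refine intervalIntegral.integral_hasDerivWithinAt_right
        (hρii.mono_set ?_) ⟨Icc 0 T, hmem' x hx, hρ_int.aestronglyMeasurable⟩ ?_
      · rw [uIcc_of_le hx.1, uIcc_of_le hT]
        exact Icc_subset_Icc le_rfl hx.2.le
      · refine ContinuousWithinAt.mul ?_ ((hq_rc x hx).mono Ioi_subset_Ici_self |>.add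
          continuousWithinAt_const)
        exact ((hexpc x ⟨hx.1, hx.2.le⟩).mono_of_mem_nhdsWithin (hmem' x hx))
    have hρ0 : ∀ s ∈ Icc (0:ℝ) T, 0 ≤ ρ s := fun s hs =>
      mul_nonneg (Real.exp_pos _).le (by linarith [hq0 s hs])
    have hRnonneg : ∀ x ∈ Icc (0:ℝ) T, 0 ≤ R x := fun x hx =>
      intervalIntegral.integral_nonneg hx.1 fun s hs => hρ0 s ⟨hs.1, hs.2.trans hx.2⟩
    set c0 : ℝ := ‖u 0‖ with hc0
    set B : ℝ → ℝ := fun x => Real.exp (P x) * (c0 + ε + R x) with hBdef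
    have hBpos : ∀ x ∈ Icc (0:ℝ) T, 0 < B x := fun x hx =>
      mul_pos (Real.exp_pos _)
        (by have h1 := hRnonneg x hx; have h2 : (0:ℝ) ≤ c0 := hc0 ▸ norm_nonneg _; linarith)
    have hBcont : ContinuousOn B (Icc 0 T) :=
      (Real.continuous_exp.comp_continuousOn hPcont).mul (continuousOn_const.add hRcont)
    set Bd : ℝ → ℝ := fun x => Real.exp (P x) * p x * (c0 + ε + R x) + Real.exp (P x) * ρ x
      with hBddef
    have hB' : ∀ x ∈ Ico (0:ℝ) T, HasDerivWithinAt B (Bd x) (Ici x) x := by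
      intro x hx
      have h1 := (hP' x hx).exp
      have h2 := (hR' x hx).const_add (c0 + ε)
      exact h1.mul h2
    have hexpPρ : ∀ x, Real.exp (P x) * ρ x = q x + ε := by
      intro x
      rw [hρdef]
      show Real.exp (P x) * (Real.exp (-P x) * (q x + ε)) = _
      rw [← mul_assoc, ← Real.exp_add]
      simp
    set φ : ℝ → ℝ := fun x => ⟪u x, u x⟫ with hφdef
    set φd : ℝ → ℝ := fun x => ⟪u x, u' x⟫ + ⟪u' x, u x⟫ with hφddef
    have hφ' : ∀ x ∈ Ico (0:ℝ) T, HasDerivWithinAt φ (φd x) (Ici x) x := fun x hx =>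
      (hu' x hx).inner ℝ (hu' x hx)
    have hφcont : ContinuousOn φ (Icc 0 T) := hu_cont.inner hu_cont
    have ha : φ 0 ≤ B 0 * B 0 := by
      have hP0 : P 0 = 0 := intervalIntegral.integral_same
      have hR0 : R 0 = 0 := intervalIntegral.integral_same
      have hB0 : B 0 = c0 + ε := by
        show Real.exp (P 0) * (c0 + ε + R 0) = _
        rw [hP0, hR0]; simp
      rw [hφdef, hB0]
      show ⟪u 0, u 0⟫ ≤ _
      rw [real_inner_self_eq_norm_sq, ← hc0]
      have h2 : (0:ℝ) ≤ c0 := hc0 ▸ norm_nonneg _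
      nlinarith
    have hcontact : ∀ x ∈ Ico (0:ℝ) T, φ x = B x * B x →
        φd x < Bd x * B x + B x * Bd x := by
      intro x hx hco
      have hxI : x ∈ Icc (0:ℝ) T := ⟨hx.1, hx.2.le⟩
      have hBx := hBpos x hxI
      have hnormsq : ‖u x‖ ^ 2 = B x * B x := by
        rw [← real_inner_self_eq_norm_sq]; exact hco
      have hule : ‖u x‖ ≤ B x := by nlinarith [norm_nonneg (u x)]
      have hf'le : φd x ≤ 2 * (p x * ‖u x‖ ^ 2 + q x * ‖u x‖) := by
        have h := hbound x hx
        have h2 : φd x = 2 * ⟪u x, u' x⟫ := by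
          rw [hφddef]
          show ⟪u x, u' x⟫ + ⟪u' x, u x⟫ = _
          rw [real_inner_comm (u' x) (u x)]; ring
        rw [h2]; linarith
      have hBdval : Bd x = p x * B x + (q x + ε) := by
        rw [hBddef]
        show Real.exp (P x) * p x * (c0 + ε + R x) + Real.exp (P x) * ρ x = _
        rw [hexpPρ x, hBdef]
        ring
      have hqx := hq0 x hxI
      have hkey : q x * ‖u x‖ ≤ q x * B x := mul_le_mul_of_nonneg_left hule hqx
      have : Bd x * B x + B x * Bd x = 2 * (B x * (p x * B x + (q x + ε))) := by
        rw [hBdval]; ring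
      rw [this]
      rw [hnormsq] at hf'le
      nlinarith [hf'le, hkey, mul_pos hε hBx]
    have hcomp :=
      image_le_of_deriv_right_lt_deriv_boundary' hφcont hφ' ha (hBcont.mul hBcont)
        (fun x hx => (hB' x hx).mul (hB' x hx)) hcontact (right_mem_Icc.2 hT)
    have huT : ‖u T‖ ≤ B T := by
      have h1 : ‖u T‖ ^ 2 ≤ B T * B T := by
        rw [← real_inner_self_eq_norm_sq]; exact hcomp
      nlinarith [norm_nonneg (u T), hBpos T (right_mem_Icc.2 hT)]
    -- unfold B T
    have hq_int' : IntegrableOn (fun s => Real.exp (-P s) * q s) (Icc 0 T) := by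
      have : (fun s => Real.exp (-P s) * q s) = fun s => Real.exp (-P s) * q s := rfl
      exact Integrable.bdd_mul hq_int (hexpc.aestronglyMeasurable measurableSet_Icc)
        ((ae_restrict_iff' measurableSet_Icc).2 (ae_of_all _ fun s hs => hC s hs))
    have hI1 : IntervalIntegrable (fun s => Real.exp (-P s) * q s) volume 0 T :=
      (intervalIntegrable_iff_integrableOn_Icc_of_le hT).2 hq_int'
    have hI2 : IntervalIntegrable (fun s => Real.exp (-P s)) volume 0 T :=
      (by rwa [uIcc_of_le hT] : ContinuousOn _ (uIcc 0 T)).intervalIntegrable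
    have hRT : R T = (∫ s in (0:ℝ)..T, Real.exp (-P s) * q s) +
        ε * ∫ s in (0:ℝ)..T, Real.exp (-P s) := by
      have h0 : R T = ∫ s in (0:ℝ)..T, (Real.exp (-P s) * q s + ε * Real.exp (-P s)) := by
        refine intervalIntegral.integral_congr fun s _ => ?_
        show Real.exp (-P s) * (q s + ε) = _
        ring
      rw [h0, intervalIntegral.integral_add hI1 (hI2.const_mul ε),
        intervalIntegral.integral_const_mul]
    have hBT : B T = Real.exp (P T) * (c0 + ∫ s in (0:ℝ)..T, Real.exp (-P s) * q s) +
        ε * (Real.exp (P T) * (1 + ∫ s in (0:ℝ)..T, Real.exp (-P s))) := by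
      show Real.exp (P T) * (c0 + ε + R T) = _
      rw [hRT]; ring
    rw [hBT] at huT
    exact huT
  -- let ε → 0
  set X : ℝ := Real.exp (P T) * (‖u 0‖ + ∫ s in (0:ℝ)..T, Real.exp (-P s) * q s) with hX
  set Kc : ℝ := Real.exp (P T) * (1 + ∫ s in (0:ℝ)..T, Real.exp (-P s)) with hKc
  have hKc0 : 0 ≤ Kc := by
    rw [hKc]
    have : 0 ≤ ∫ s in (0:ℝ)..T, Real.exp (-P s) :=
      intervalIntegral.integral_nonneg hT fun s _ => (Real.exp_pos _).le
    positivity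
  have : ∀ ε' > (0:ℝ), ‖u T‖ ≤ X + ε' := by
    intro ε' hε'
    have h := hmain (ε' / (Kc + 1)) (by positivity)
    refine h.trans ?_
    have : ε' / (Kc + 1) * Kc ≤ ε' := by
      rw [div_mul_eq_mul_div, div_le_iff₀ (by linarith)]
      nlinarith
    linarith
  -- conclude
  by_contra hcon
  push_neg at hcon
  have h := this ((‖u T‖ - X) / 2) (by linarith)
  linarith

end Core

/-- the Fundamental Theorem, Theorem 2 of the paper: bound on the
distance between a solution of the initial value problem `θ(0) = θ_s`,
`θ'(t) = g(t, θ(t))` on `[0, t_e)` and the continuous polygonal curve produced by Euler's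
method with step size `η > 0`, in terms of a bound `m` on the maximal eigenvalue of the
symmetrized Jacobian of `g` around the trajectories and a bound `δ` on the discrepancy
between the vector field and the velocity (right derivative) of the polygonal curve. -/
theorem fundamental_theorem_for_euler_method {d : ℕ}
    (g : ℝ → EuclideanSpace ℝ (Fin d) → EuclideanSpace ℝ (Fin d))
    (hg : ContDiffOn ℝ 1 (fun p : ℝ × EuclideanSpace ℝ (Fin d) => g p.1 p.2)
      (Set.Ici 0 ×ˢ Set.univ))
    (te : ℝ) (θs : EuclideanSpace ℝ (Fin d)) (θ : ℝ → EuclideanSpace ℝ (Fin d))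
    (hθ0 : θ 0 = θs)
    (hθ : ∀ t ∈ Set.Ico (0 : ℝ) te, HasDerivWithinAt θ (g t (θ t)) (Set.Ico (0 : ℝ) te) t)
    (η : ℝ) (hη : 0 < η) (θ0 : EuclideanSpace ℝ (Fin d))
    (m : ℝ → ℝ) (hm : IntegrableOn m (Set.Ico (0 : ℝ) te))
    (hmax : ∀ t ∈ Set.Ico (0 : ℝ) te, ∀ q ∈ segment ℝ (θ t) (eulerCurve g η θ0 t),
      ∀ v : EuclideanSpace ℝ (Fin d), ⟪v, fderiv ℝ (g t) q v⟫ ≤ m t * ‖v‖ ^ 2)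
    (δ : ℝ → ℝ) (hδint : IntegrableOn δ (Set.Ico (0 : ℝ) te))
    (hδ0 : ∀ t ∈ Set.Ico (0 : ℝ) te, 0 ≤ δ t)
    (hδ : ∀ t ∈ Set.Ico (0 : ℝ) te,
      ‖g (⌊t / η⌋₊ * η) (eulerIter g η θ0 ⌊t / η⌋₊) - g t (eulerCurve g η θ0 t)‖ ≤ δ t) :
    ∀ t ∈ Set.Ico (0 : ℝ) te,
      ‖θ t - eulerCurve g η θ0 t‖ ≤
        Real.exp (∫ t' in (0 : ℝ)..t, m t') *
          (‖θ 0 - eulerCurve g η θ0 0‖ +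
            ∫ t' in (0 : ℝ)..t, Real.exp (-∫ t'' in (0 : ℝ)..t', m t'') * δ t') := by
  intro t ht
  have hsub : Icc (0:ℝ) t ⊆ Ico (0:ℝ) te := fun s hs => ⟨hs.1, lt_of_le_of_lt hs.2 ht.2⟩
  by_cases hd : d = 0
  · subst hd
    have hzero : ∀ v : EuclideanSpace ℝ (Fin 0), v = 0 := fun v => PiLp.ext fun i => i.elim0
    rw [hzero (θ t - eulerCurve g η θ0 t), norm_zero,
      hzero (θ 0 - eulerCurve g η θ0 0), norm_zero]
    have hint : 0 ≤ ∫ t' in (0:ℝ)..t, Real.exp (-∫ t'' in (0:ℝ)..t', m t'') * δ t' :=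
      intervalIntegral.integral_nonneg ht.1 fun s hs =>
        mul_nonneg (Real.exp_pos _).le (hδ0 s (hsub hs))
    have hexp := Real.exp_pos (∫ t' in (0:ℝ)..t, m t')
    nlinarith
  -- main case
  set θb : ℝ → EuclideanSpace ℝ (Fin d) := eulerCurve g η θ0 with hθbdef
  have hθbc : Continuous θb := eulerCurve_continuous g η θ0 hη
  have hθc : ContinuousOn θ (Ico 0 te) := fun x hx => (hθ x hx).continuousWithinAt
  -- the joint derivative
  set S : Set (ℝ × EuclideanSpace ℝ (Fin d)) := Ici (0:ℝ) ×ˢ univ with hSdef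
  have hSuniq : UniqueDiffOn ℝ S := (uniqueDiffOn_Ici 0).prod uniqueDiffOn_univ
  set G : ℝ × EuclideanSpace ℝ (Fin d) → EuclideanSpace ℝ (Fin d) :=
    fun p => g p.1 p.2 with hGdef
  set D := fderivWithin ℝ G S with hDdef
  have hDcont : ContinuousOn D S := hg.continuousOn_fderivWithin hSuniq le_rfl
  have hslice : ∀ x : ℝ, 0 ≤ x → ∀ q, HasFDerivAt (g x)
      ((D (x, q)).comp ((0 : EuclideanSpace ℝ (Fin d) →L[ℝ] ℝ).prod
        (ContinuousLinearMap.id ℝ _))) q := by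
    intro x hx q
    have hGd : HasFDerivWithinAt G (D (x, q)) S (x, q) :=
      ((hg.differentiableOn one_ne_zero) (x, q) ⟨hx, trivial⟩).hasFDerivWithinAt
    have hι : HasFDerivAt (fun q' => ((x, q') : ℝ × EuclideanSpace ℝ (Fin d)))
        ((0 : EuclideanSpace ℝ (Fin d) →L[ℝ] ℝ).prod (ContinuousLinearMap.id ℝ _)) q :=
      (hasFDerivAt_const x q).prodMk (hasFDerivAt_id q)
    have hcomp := HasFDerivWithinAt.comp (s := (univ : Set (EuclideanSpace ℝ (Fin d))))
      (t := S) q hGd (hι.hasFDerivWithinAt (s := univ)) (fun q' _ => ⟨hx, trivial⟩)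
    rw [hasFDerivWithinAt_univ] at hcomp
    exact hcomp
  have hfderiv : ∀ x : ℝ, 0 ≤ x → ∀ q v, fderiv ℝ (g x) q v = D (x, q) (0, v) := by
    intro x hx q v
    rw [(hslice x hx q).fderiv]
    rfl
  -- segment parametrization
  set c : ℝ → ℝ → EuclideanSpace ℝ (Fin d) := fun x s => θ x + s • (θb x - θ x) with hcdef
  have hcseg : ∀ x, ∀ s ∈ Icc (0:ℝ) 1, c x s ∈ segment ℝ (θ x) (θb x) := by
    intro x s hs
    rw [segment_eq_image']
    exact mem_image_of_mem _ hs
  -- sup of the quadratic form over the segment and the unit sphere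
  set K : Set (ℝ × EuclideanSpace ℝ (Fin d)) := Icc (0:ℝ) 1 ×ˢ Metric.sphere 0 1 with hKdef
  have hKcomp : IsCompact K := isCompact_Icc.prod (isCompact_sphere 0 1)
  have hKne : K.Nonempty := by
    have hv : (EuclideanSpace.single ⟨0, Nat.pos_of_ne_zero hd⟩ (1:ℝ) :
        EuclideanSpace ℝ (Fin d)) ∈ Metric.sphere (0 : EuclideanSpace ℝ (Fin d)) 1 := by
      rw [mem_sphere_zero_iff_norm, EuclideanSpace.norm_single]
      norm_num
    exact ⟨(0, EuclideanSpace.single ⟨0, Nat.pos_of_ne_zero hd⟩ (1:ℝ)),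
      Set.mem_prod.mpr ⟨⟨le_rfl, zero_le_one⟩, hv⟩⟩
  set Φ : ℝ × (ℝ × EuclideanSpace ℝ (Fin d)) → ℝ :=
    fun z => ⟪z.2.2, D (z.1, c z.1 z.2.1) (0, z.2.2)⟫ with hΦdef
  set mstar : ℝ → ℝ := fun x => sSup ((fun y => Φ (x, y)) '' K) with hmstardef
  have hΦcont : ContinuousOn Φ (Icc (0:ℝ) t ×ˢ K) := by
    have hθf : ContinuousOn (fun z : ℝ × (ℝ × EuclideanSpace ℝ (Fin d)) => θ z.1)
        (Icc (0:ℝ) t ×ˢ K) :=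
      hθc.comp continuous_fst.continuousOn fun z hz => hsub hz.1
    have hθbf : ContinuousOn (fun z : ℝ × (ℝ × EuclideanSpace ℝ (Fin d)) => θb z.1)
        (Icc (0:ℝ) t ×ˢ K) := (hθbc.comp continuous_fst).continuousOn
    have h1 : ContinuousOn (fun z : ℝ × (ℝ × EuclideanSpace ℝ (Fin d)) =>
        ((z.1, c z.1 z.2.1) : ℝ × EuclideanSpace ℝ (Fin d))) (Icc (0:ℝ) t ×ˢ K) := by
      refine continuousOn_fst.prodMk ?_
      exact hθf.add ((continuous_snd.fst.continuousOn).smul (hθbf.sub hθf))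
    have h2 : ContinuousOn (fun z : ℝ × (ℝ × EuclideanSpace ℝ (Fin d)) =>
        D (z.1, c z.1 z.2.1)) (Icc (0:ℝ) t ×ˢ K) :=
      hDcont.comp h1 fun z hz => ⟨hz.1.1, trivial⟩
    have h3 : ContinuousOn (fun z : ℝ × (ℝ × EuclideanSpace ℝ (Fin d)) =>
        D (z.1, c z.1 z.2.1) (0, z.2.2)) (Icc (0:ℝ) t ×ˢ K) :=
      h2.clm_apply ((continuous_const.prodMk continuous_snd.snd).continuousOn)
    exact (continuous_snd.snd.continuousOn).inner h3
  have hmcont : ContinuousOn mstar (Icc 0 t) :=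
    continuousOn_sSup_param isCompact_Icc hKcomp hKne hΦcont
  have hbddA : ∀ x ∈ Icc (0:ℝ) t, BddAbove ((fun y => Φ (x, y)) '' K) := fun x hx =>
    (hKcomp.image_of_continuousOn
      (hΦcont.comp (Continuous.prodMk_right x).continuousOn fun y hy => ⟨hx, hy⟩)).bddAbove
  have hquad : ∀ x ∈ Icc (0:ℝ) t, ∀ p ∈ segment ℝ (θ x) (θb x),
      ∀ v : EuclideanSpace ℝ (Fin d), ⟪v, fderiv ℝ (g x) p v⟫ ≤ mstar x * ‖v‖ ^ 2 := by
    intro x hx p hp v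
    rcases eq_or_ne v 0 with rfl | hv
    · simp
    · rw [segment_eq_image'] at hp
      obtain ⟨s, hs, hqs⟩ := hp
      have hvn : ‖v‖ ≠ 0 := norm_ne_zero_iff.2 hv
      set w : EuclideanSpace ℝ (Fin d) := ‖v‖⁻¹ • v with hwdef
      have hwn : ‖w‖ = 1 := by
        rw [hwdef, norm_smul, norm_inv, norm_norm, inv_mul_cancel₀ hvn]
      have hmem : Φ (x, (s, w)) ≤ mstar x :=
        le_csSup (hbddA x hx) ⟨(s, w), Set.mem_prod.mpr ⟨hs,
          show w ∈ Metric.sphere (0 : EuclideanSpace ℝ (Fin d)) 1 from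
            mem_sphere_zero_iff_norm.mpr hwn⟩, rfl⟩
      have hΦval : Φ (x, (s, w)) = ⟪w, fderiv ℝ (g x) p w⟫ := by
        show ⟪w, D (x, c x s) (0, w)⟫ = _
        rw [← hfderiv x hx.1 (c x s) w, show c x s = p from hqs]
      have hvw : v = ‖v‖ • w := by
        rw [hwdef, smul_smul, mul_inv_cancel₀ hvn, one_smul]
      have hsc : ⟪v, fderiv ℝ (g x) p v⟫ = ‖v‖ ^ 2 * ⟪w, fderiv ℝ (g x) p w⟫ := by
        conv_lhs => rw [hvw]
        rw [(fderiv ℝ (g x) p).map_smul, real_inner_smul_left, real_inner_smul_right]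
        ring
      rw [hsc, mul_comm (mstar x) (‖v‖ ^ 2)]
      refine mul_le_mul_of_nonneg_left ?_ (by positivity)
      rw [← hΦval]
      exact hmem
  have hmle : ∀ x ∈ Icc (0:ℝ) t, mstar x ≤ m x := by
    intro x hx
    refine csSup_le (hKne.image _) ?_
    rintro r ⟨⟨s, v⟩, ⟨hsm, hvm⟩, rfl⟩
    have hvn : ‖v‖ = 1 := mem_sphere_zero_iff_norm.mp hvm
    show ⟪v, D (x, c x s) (0, v)⟫ ≤ m x
    rw [← hfderiv x hx.1 (c x s) v]
    have := hmax x (hsub hx) (c x s) (hcseg x s hsm) v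
    rwa [hvn, one_pow, mul_one] at this
  -- the mean value bound along the segment
  set u : ℝ → EuclideanSpace ℝ (Fin d) := fun x => θ x - θb x with hudef
  have hMVT : ∀ x ∈ Icc (0:ℝ) t,
      ⟪u x, g x (θ x) - g x (θb x)⟫ ≤ mstar x * ‖u x‖ ^ 2 := by
    intro x hx
    set C : ℝ := mstar x * ‖u x‖ ^ 2 with hCdef
    set w : ℝ → ℝ := fun s => ⟪u x, g x (c x s)⟫ + s * C with hwdef
    have hw' : ∀ s : ℝ,
        HasDerivAt w (⟪u x, D (x, c x s) (0, θb x - θ x)⟫ + C) s := by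
      intro s
      have hcd : HasDerivAt (fun s' => c x s') (θb x - θ x) s := by
        have h := ((hasDerivAt_id s).smul_const (θb x - θ x)).const_add (θ x)
        simp only [one_smul] at h
        exact h
      have hgd := (hslice x hx.1 (c x s)).comp_hasDerivAt s hcd
      have hinner := (hasDerivAt_const s (u x)).inner ℝ hgd
      have hlin := hinner.add ((hasDerivAt_id s).mul_const C)
      have happ : ((D (x, c x s)).comp
            ((0 : EuclideanSpace ℝ (Fin d) →L[ℝ] ℝ).prod (ContinuousLinearMap.id ℝ _)))
            (θb x - θ x) = D (x, c x s) (0, θb x - θ x) := rfl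
      refine HasDerivAt.congr_deriv hlin ?_
      simp only [happ, inner_zero_left, add_zero, one_mul]
    have hw'nonneg : ∀ s ∈ Icc (0:ℝ) 1,
        0 ≤ ⟪u x, D (x, c x s) (0, θb x - θ x)⟫ + C := by
      intro s hs
      have h1 : D (x, c x s) (0, θb x - θ x) = fderiv ℝ (g x) (c x s) (θb x - θ x) :=
        (hfderiv x hx.1 _ _).symm
      have h2 : θb x - θ x = -u x := by rw [hudef]; exact (neg_sub _ _).symm
      rw [h1, h2, map_neg, inner_neg_right]
      have := hquad x hx (c x s) (hcseg x s hs) (u x)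
      rw [hCdef]
      linarith
    have hmono : MonotoneOn w (Icc 0 1) := by
      refine monotoneOn_of_deriv_nonneg (convex_Icc 0 1) ?_ ?_ ?_
      · exact (Differentiable.continuous fun s => (hw' s).differentiableAt).continuousOn
      · exact fun s _ => (hw' s).differentiableAt.differentiableWithinAt
      · intro s hs
        rw [(hw' s).deriv]
        rw [interior_Icc] at hs
        exact hw'nonneg s ⟨hs.1.le, hs.2.le⟩
    have h01 := hmono ⟨le_rfl, zero_le_one⟩ ⟨zero_le_one, le_rfl⟩ zero_le_one
    have hc0 : c x 0 = θ x := by show θ x + (0:ℝ) • _ = θ x; simp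
    have hc1 : c x 1 = θb x := by show θ x + (1:ℝ) • _ = θb x; simp
    have e0 : w 0 = ⟪u x, g x (θ x)⟫ := by
      show ⟪u x, g x (c x 0)⟫ + 0 * C = _
      rw [hc0]; ring
    have e1 : w 1 = ⟪u x, g x (θb x)⟫ + C := by
      show ⟪u x, g x (c x 1)⟫ + 1 * C = _
      rw [hc1]; ring
    rw [e0, e1] at h01
    rw [inner_sub_right, hCdef] at *
    linarith
  -- the discrete defect
  set vk : ℝ → EuclideanSpace ℝ (Fin d) :=
    fun x => g (⌊x / η⌋₊ * η) (eulerIter g η θ0 ⌊x / η⌋₊) with hvkdef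
  set δs : ℝ → ℝ := fun x => ‖vk x - g x (θb x)‖ with hδsdef
  have hgθb : ContinuousOn (fun x => g x (θb x)) (Ici (0:ℝ)) := by
    have h1 : Continuous fun x : ℝ => ((x, θb x) : ℝ × EuclideanSpace ℝ (Fin d)) :=
      continuous_id.prodMk hθbc
    exact hg.continuousOn.comp h1.continuousOn fun x hx => ⟨hx, trivial⟩
  have hδs_rc : ∀ x ∈ Ico (0:ℝ) t, ContinuousWithinAt δs (Ici x) x := by
    intro x hx
    have hfloor : ∀ s ∈ Ico x ((⌊x / η⌋₊ + 1) * η), δs s = ‖vk x - g s (θb s)‖ := by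
      intro s hs
      show ‖g (↑⌊s / η⌋₊ * η) (eulerIter g η θ0 ⌊s / η⌋₊) - g s (θb s)‖ = _
      rw [euler_floor_const η hη hx.1 hs.1 hs.2]
    have hnice : ContinuousWithinAt (fun s => ‖vk x - g s (θb s)‖) (Ici x) x := by
      refine (continuousWithinAt_const.sub ?_).norm
      exact (hgθb x hx.1).mono (Ici_subset_Ici.2 hx.1)
    refine ContinuousWithinAt.mono_of_mem_nhdsWithin ?_
      (Ico_mem_nhdsGE (eulerCurve_lt_next η hη x))
    refine (hnice.mono Ico_subset_Ici_self).congr hfloor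
      (hfloor x ⟨le_rfl, eulerCurve_lt_next η hη x⟩)
  have hδs_le : ∀ s ∈ Icc (0:ℝ) t, δs s ≤ δ s := fun s hs => hδ s (hsub hs)
  have hδs0 : ∀ s, 0 ≤ δs s := fun s => norm_nonneg _
  have hδs_meas : AEStronglyMeasurable δs (volume.restrict (Icc 0 t)) := by
    have h1 : Measurable fun s : ℝ => ⌊s / η⌋₊ :=
      Nat.measurable_floor.comp (measurable_id.div_const η)
    have h2 : Measurable vk :=
      (measurable_from_nat (f := fun k : ℕ => g (k * η) (eulerIter g η θ0 k))).comp h1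
    have h3 : AEStronglyMeasurable (fun s => g s (θb s)) (volume.restrict (Icc 0 t)) :=
      (hgθb.mono (fun s (hs : s ∈ Icc (0:ℝ) t) => hs.1)).aestronglyMeasurable
        measurableSet_Icc
    exact (h2.aestronglyMeasurable.sub h3).norm
  have hδs_int : IntegrableOn δs (Icc 0 t) := by
    refine Integrable.mono' (hδint.mono_set hsub) hδs_meas ?_
    refine (ae_restrict_iff' measurableSet_Icc).2 (ae_of_all _ fun s hs => ?_)
    rw [Real.norm_eq_abs, abs_of_nonneg (hδs0 s)]
    exact hδs_le s hs
  -- derivative of u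
  have hu' : ∀ x ∈ Ico (0:ℝ) t, HasDerivWithinAt u (g x (θ x) - vk x) (Ici x) x := by
    intro x hx
    have hmemt : Ico (0:ℝ) te ∈ 𝓝[Ici x] x := by
      have h1 : Ici x ∩ Iio te ∈ 𝓝[Ici x] x :=
        inter_mem self_mem_nhdsWithin
          (mem_nhdsWithin_of_mem_nhds (Iio_mem_nhds (hx.2.trans ht.2)))
      exact mem_of_superset h1 fun z hz => ⟨le_trans hx.1 hz.1, hz.2⟩
    have hθd := (hθ x ⟨hx.1, hx.2.trans ht.2⟩).mono_of_mem_nhdsWithin hmemt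
    exact hθd.sub (eulerCurve_hasDerivWithinAt g η θ0 hη hx.1)
  -- the inner-product bound
  have hbnd : ∀ x ∈ Ico (0:ℝ) t,
      ⟪u x, g x (θ x) - vk x⟫ ≤ mstar x * ‖u x‖ ^ 2 + δs x * ‖u x‖ := by
    intro x hx
    have hsplit : g x (θ x) - vk x = (g x (θ x) - g x (θb x)) + (g x (θb x) - vk x) :=
      (sub_add_sub_cancel _ _ _).symm
    rw [hsplit, inner_add_right]
    have h1 := hMVT x ⟨hx.1, hx.2.le⟩
    have h2 : ⟪u x, g x (θb x) - vk x⟫ ≤ ‖u x‖ * ‖g x (θb x) - vk x‖ :=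
      real_inner_le_norm _ _
    have h3 : ‖g x (θb x) - vk x‖ = δs x := by
      show _ = ‖vk x - g x (θb x)‖
      exact norm_sub_rev _ _
    rw [h3] at h2
    nlinarith
  -- apply the core comparison lemma
  have hcore := gronwall_core t ht.1 u
    ((hθc.mono hsub).sub hθbc.continuousOn) _ hu' mstar hmcont δs
    (fun x _ => hδs0 x) hδs_int hδs_rc hbnd
  -- compare the `mstar`, `δs` bound against the `m`, `δ` bound
  have huIcc : uIcc (0:ℝ) t = Icc 0 t := uIcc_of_le ht.1
  have hsubu : ∀ a b : ℝ, a ∈ Icc (0:ℝ) t → b ∈ Icc (0:ℝ) t → uIcc a b ⊆ Icc (0:ℝ) t := by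
    intro a b ha hb
    rw [← huIcc]
    exact uIcc_subset_uIcc (huIcc.symm ▸ ha) (huIcc.symm ▸ hb)
  have hmii : ∀ a b : ℝ, a ∈ Icc (0:ℝ) t → b ∈ Icc (0:ℝ) t →
      IntervalIntegrable m volume a b := fun a b ha hb =>
    (hm.mono_set ((hsubu a b ha hb).trans hsub)).intervalIntegrable
  have hmsii : ∀ a b : ℝ, a ∈ Icc (0:ℝ) t → b ∈ Icc (0:ℝ) t →
      IntervalIntegrable mstar volume a b := fun a b ha hb =>
    (hmcont.mono (hsubu a b ha hb)).intervalIntegrable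
  set Pm : ℝ → ℝ := fun x => ∫ s in (0:ℝ)..x, mstar s with hPmdef
  set M : ℝ → ℝ := fun x => ∫ s in (0:ℝ)..x, m s with hMdef
  have h0t : (0:ℝ) ∈ Icc (0:ℝ) t := ⟨le_rfl, ht.1⟩
  have htt : t ∈ Icc (0:ℝ) t := ⟨ht.1, le_rfl⟩
  have hPmM : ∀ s ∈ Icc (0:ℝ) t, Pm t - Pm s ≤ M t - M s := by
    intro s hs
    have e1 : Pm t - Pm s = ∫ r in s..t, mstar r :=
      intervalIntegral.integral_interval_sub_left (hmsii 0 t h0t htt) (hmsii 0 s h0t hs)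
    have e2 : M t - M s = ∫ r in s..t, m r :=
      intervalIntegral.integral_interval_sub_left (hmii 0 t h0t htt) (hmii 0 s h0t hs)
    rw [e1, e2]
    refine intervalIntegral.integral_mono_on hs.2 (hmsii s t hs htt) (hmii s t hs htt)
      fun r hr => hmle r ⟨le_trans hs.1 hr.1, hr.2⟩
  have hPmMt : Pm t ≤ M t := by
    have := hPmM 0 h0t
    have e0 : Pm 0 = 0 := intervalIntegral.integral_same
    have e0' : M 0 = 0 := intervalIntegral.integral_same
    rw [e0, e0'] at this
    linarith
  -- continuity of the primitives
  have hPmcont : ContinuousOn Pm (Icc 0 t) := by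
    have h := intervalIntegral.continuousOn_primitive_interval' (hmsii 0 t h0t htt)
      left_mem_uIcc
    rwa [uIcc_of_le ht.1] at h
  have hMcont : ContinuousOn M (Icc 0 t) := by
    have h := intervalIntegral.continuousOn_primitive_interval' (hmii 0 t h0t htt)
      left_mem_uIcc
    rwa [uIcc_of_le ht.1] at h
  -- integrabilities of the weighted defects
  have hbd1 : ∃ C, ∀ s ∈ Icc (0:ℝ) t, ‖Real.exp (Pm t - Pm s)‖ ≤ C :=
    isCompact_Icc.exists_bound_of_continuousOn
      (Real.continuous_exp.comp_continuousOn (continuousOn_const.sub hPmcont))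
  have hbd2 : ∃ C, ∀ s ∈ Icc (0:ℝ) t, ‖Real.exp (M t - M s)‖ ≤ C :=
    isCompact_Icc.exists_bound_of_continuousOn
      (Real.continuous_exp.comp_continuousOn (continuousOn_const.sub hMcont))
  obtain ⟨C1, hC1⟩ := hbd1
  obtain ⟨C2, hC2⟩ := hbd2
  have hint1 : IntegrableOn (fun s => Real.exp (Pm t - Pm s) * δs s) (Icc 0 t) :=
    Integrable.bdd_mul hδs_int
      ((Real.continuous_exp.comp_continuousOn
        (continuousOn_const.sub hPmcont)).aestronglyMeasurable measurableSet_Icc)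
      ((ae_restrict_iff' measurableSet_Icc).2 (ae_of_all _ fun s hs => hC1 s hs))
  have hint2 : IntegrableOn (fun s => Real.exp (M t - M s) * δ s) (Icc 0 t) :=
    Integrable.bdd_mul (hδint.mono_set hsub)
      ((Real.continuous_exp.comp_continuousOn
        (continuousOn_const.sub hMcont)).aestronglyMeasurable measurableSet_Icc)
      ((ae_restrict_iff' measurableSet_Icc).2 (ae_of_all _ fun s hs => hC2 s hs))
  have hIieq : ∀ s ∈ Icc (0:ℝ) t,
      Real.exp (Pm t - Pm s) * δs s ≤ Real.exp (M t - M s) * δ s := by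
    intro s hs
    refine mul_le_mul (Real.exp_le_exp.2 (hPmM s hs)) (hδs_le s hs) (hδs0 s)
      (Real.exp_pos _).le
  have hImono : (∫ s in (0:ℝ)..t, Real.exp (Pm t - Pm s) * δs s) ≤
      ∫ s in (0:ℝ)..t, Real.exp (M t - M s) * δ s :=
    intervalIntegral.integral_mono_on ht.1
      ((intervalIntegrable_iff_integrableOn_Icc_of_le ht.1).2 hint1)
      ((intervalIntegrable_iff_integrableOn_Icc_of_le ht.1).2 hint2) hIieq
  -- rewrite the core bound
  have hrw1 : Real.exp (Pm t) * (‖u 0‖ + ∫ s in (0:ℝ)..t, Real.exp (-Pm s) * δs s) =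
      Real.exp (Pm t) * ‖u 0‖ + ∫ s in (0:ℝ)..t, Real.exp (Pm t - Pm s) * δs s := by
    rw [mul_add, ← intervalIntegral.integral_const_mul]
    congr 1
    refine intervalIntegral.integral_congr fun s _ => ?_
    rw [← mul_assoc, ← Real.exp_add]
    ring_nf
  have hrw2 : Real.exp (M t) * (‖u 0‖ + ∫ s in (0:ℝ)..t, Real.exp (-M s) * δ s) =
      Real.exp (M t) * ‖u 0‖ + ∫ s in (0:ℝ)..t, Real.exp (M t - M s) * δ s := by
    rw [mul_add, ← intervalIntegral.integral_const_mul]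
    congr 1
    refine intervalIntegral.integral_congr fun s _ => ?_
    rw [← mul_assoc, ← Real.exp_add]
    ring_nf
  have hfin : ‖u t‖ ≤ Real.exp (M t) * (‖u 0‖ + ∫ s in (0:ℝ)..t, Real.exp (-M s) * δ s) := by
    rw [hrw2]
    rw [hrw1] at hcore
    have hexple : Real.exp (Pm t) * ‖u 0‖ ≤ Real.exp (M t) * ‖u 0‖ :=
      mul_le_mul_of_nonneg_right (Real.exp_le_exp.2 hPmMt) (norm_nonneg _)
    linarith
  exact hfin
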